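/- arXiv:1911.09039 — 4 statements merged into one kernel-verified Lean document; each statement's English description precedes it below -/
import Mathlib

section
/- For every n ≥ 1, j : Fin n, S : Finset (Fin n), and integer k: if j ∈ S then X_j · D_{S,k} · X_j = exp(+(π i / 2^k) • Z_S), which is the inverse of D_{S,k}; and if j ∉ S then X_j · D_{S,k} · X_j = D_{S,k}. -/
noncomputable section

/-- The parity operator `Z_S`: the diagonal matrix whose `(z,z)` entry is
`(-1) ^ (∑ j ∈ S, z j)`. -/
def Zgad (n : ℕ) (S : Finset (Fin n)) : Matrix (Fin n → Fin 2) (Fin n → Fin 2) ℂ :=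
  Matrix.diagonal fun z => (-1 : ℂ) ^ (∑ j ∈ S, (z j : ℕ))

/-- The phase-parity operator `D_{S,k} = exp(-(π i / 2^k) • Z_S)`, `k : ℤ`, `2^k : ℝ` zpow. -/
def Dop (n : ℕ) (S : Finset (Fin n)) (k : ℤ) : Matrix (Fin n → Fin 2) (Fin n → Fin 2) ℂ :=
  NormedSpace.exp ((-(↑Real.pi * Complex.I / (((2:ℝ) ^ k : ℝ) : ℂ))) • Zgad n S)

/-- `X_j`: the permutation matrix of the involution flipping coordinate `j`. -/
def Xmat (n : ℕ) (j : Fin n) : Matrix (Fin n → Fin 2) (Fin n → Fin 2) ℂ :=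
  Matrix.of fun z w => if w = Function.update z j (z j + 1) then 1 else 0

lemma flip_invol (n : ℕ) (j : Fin n) (z : Fin n → Fin 2) :
    Function.update (Function.update z j (z j + 1)) j
      (Function.update z j (z j + 1) j + 1) = z := by
  funext i
  by_cases h : i = j
  · subst h; simp; omega
  · simp [Function.update_of_ne h]

lemma sum_helper {α : Type*} [Fintype α] [DecidableEq α] (f : α → α) (b : α) (w : α)
    (g : α → ℂ) :
    (∑ x : α, if w = f x then (if x = b then g x else 0) else 0) =
      if w = f b then g b else 0 := by
  rw [show (fun x => if w = f x then (if x = b then g x else 0) else 0) =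
      (fun x => if x = b then (if w = f x then g x else 0) else 0) from ?_,
    Finset.sum_ite_eq' Finset.univ b fun x => if w = f x then g x else 0]
  · simp
  · funext x
    by_cases h1 : w = f x <;> by_cases h2 : x = b <;> simp [h1, h2]

lemma Xmat_mul_self (n : ℕ) (j : Fin n) : Xmat n j * Xmat n j = 1 := by
  ext z w
  simp only [Xmat, Matrix.mul_apply, Matrix.of_apply, Matrix.one_apply,
    ite_mul, one_mul, zero_mul, Finset.sum_ite_eq', Finset.mem_univ, if_true,
    flip_invol]
  exact if_congr eq_comm rfl rfl

lemma Xmat_conj_diag (n : ℕ) (j : Fin n) (d : (Fin n → Fin 2) → ℂ) :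
    Xmat n j * Matrix.diagonal d * Xmat n j =
      Matrix.diagonal (fun z => d (Function.update z j (z j + 1))) := by
  ext z w
  simp only [Xmat, Matrix.mul_apply, Matrix.of_apply, Matrix.diagonal_apply,
    ite_mul, one_mul, zero_mul, mul_ite, mul_zero, Finset.sum_ite_eq',
    Finset.mem_univ, if_true, flip_invol]
  rw [sum_helper (fun x => Function.update x j (x j + 1)) (Function.update z j (z j + 1)) w]
  simp only [flip_invol, mul_one]
  exact if_congr eq_comm rfl rfl

lemma parity_mem {n : ℕ} {j : Fin n} {S : Finset (Fin n)} (h : j ∈ S) (z : Fin n → Fin 2) :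
    (-1:ℂ) ^ (∑ i ∈ S, ((Function.update z j (z j + 1)) i : ℕ)) =
      -((-1:ℂ) ^ (∑ i ∈ S, (z i : ℕ))) := by
  rw [← Finset.sum_erase_add S _ h, ← Finset.sum_erase_add S (fun i => ((z i : ℕ))) h]
  have h1 : ∀ i ∈ S.erase j, ((Function.update z j (z j + 1)) i : ℕ) = (z i : ℕ) := by
    intro i hi
    rw [Function.update_of_ne (Finset.ne_of_mem_erase hi)]
  rw [Finset.sum_congr rfl h1, pow_add, pow_add, Function.update_self]
  have h2 : z j = 0 ∨ z j = 1 := by omega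
  rcases h2 with h2 | h2 <;> rw [h2] <;>
    simp [show ((0:Fin 2)+1)=1 from rfl, show ((1:Fin 2)+1)=0 from rfl, pow_succ] <;> ring

lemma parity_not_mem {n : ℕ} {j : Fin n} {S : Finset (Fin n)} (h : j ∉ S) (z : Fin n → Fin 2) :
    (-1:ℂ) ^ (∑ i ∈ S, ((Function.update z j (z j + 1)) i : ℕ)) =
      (-1:ℂ) ^ (∑ i ∈ S, (z i : ℕ)) := by
  congr 1
  refine Finset.sum_congr rfl fun i hi => ?_
  rw [Function.update_of_ne (by rintro rfl; exact h hi)]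

theorem stmt4 (n : ℕ) (hn : 1 ≤ n) (j : Fin n) (S : Finset (Fin n)) (k : ℤ) :
    (j ∈ S →
      Xmat n j * Dop n S k * Xmat n j =
        NormedSpace.exp ((↑Real.pi * Complex.I / (((2:ℝ) ^ k : ℝ) : ℂ)) • Zgad n S) ∧
      Dop n S k *
        NormedSpace.exp ((↑Real.pi * Complex.I / (((2:ℝ) ^ k : ℝ) : ℂ)) • Zgad n S) = 1 ∧
      NormedSpace.exp ((↑Real.pi * Complex.I / (((2:ℝ) ^ k : ℝ) : ℂ)) • Zgad n S) *
        Dop n S k = 1) ∧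
    (j ∉ S → Xmat n j * Dop n S k * Xmat n j = Dop n S k) := by
  set c : ℂ := (↑Real.pi * Complex.I / (((2:ℝ) ^ k : ℝ) : ℂ)) with hc
  set X := Xmat n j with hXdef
  set Z := Zgad n S with hZdef
  have hX : X * X = 1 := Xmat_mul_self n j
  have hXinv : X⁻¹ = X := Matrix.inv_eq_right_inv hX
  have hXu : IsUnit X := ⟨⟨X, X, hX, hX⟩, rfl⟩
  have hconj : ∀ s : ℂ, X * NormedSpace.exp (s • Z) * X =
      NormedSpace.exp (s • (X * Z * X)) := by
    intro s
    have := Matrix.exp_conj X (s • Z) hXu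
    rw [hXinv] at this
    rw [← this]
    congr 1
    rw [Matrix.mul_smul, Matrix.smul_mul]
  have hcomm : Commute ((-c) • Z) (c • Z) :=
    ((Commute.refl Z).smul_left _).smul_right _
  have hinv1 : NormedSpace.exp ((-c) • Z) * NormedSpace.exp (c • Z) = 1 := by
    rw [← Matrix.exp_add_of_commute _ _ hcomm]
    rw [show (-c) • Z + c • Z = 0 by rw [neg_smul, neg_add_cancel]]
    exact NormedSpace.exp_zero
  have hinv2 : NormedSpace.exp (c • Z) * NormedSpace.exp ((-c) • Z) = 1 := by
    rw [← Matrix.exp_add_of_commute _ _ hcomm.symm]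
    rw [show c • Z + (-c) • Z = 0 by rw [neg_smul, add_neg_cancel]]
    exact NormedSpace.exp_zero
  have hDop : Dop n S k = NormedSpace.exp ((-c) • Z) := rfl
  constructor
  · intro hj
    have hZc : X * Z * X = -Z := by
      rw [hXdef, hZdef, Zgad, Xmat_conj_diag,
        congrArg Matrix.diagonal (funext fun z => parity_mem hj z)]
      exact (Matrix.diagonal_neg (fun z : Fin n → Fin 2 => (-1:ℂ) ^ (∑ j ∈ S, ((z j : ℕ))))).symm
    have key : X * Dop n S k * X = NormedSpace.exp (c • Z) := by
      rw [hDop, hconj, hZc, smul_neg, neg_smul, neg_neg]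
    exact ⟨key, hinv1, hinv2⟩
  · intro hj
    have hZc : X * Z * X = Z := by
      rw [hXdef, hZdef, Zgad, Xmat_conj_diag]
      exact congrArg Matrix.diagonal (funext fun z => parity_not_mem hj z)
    rw [hDop, hconj, hZc]
end
end

section
/- For every n ≥ 1, distinct h, j : Fin n, S : Finset (Fin n), and integer k: if j ∈ S then CNOT_{h,j} · D_{S,k} · CNOT_{h,j} = D_{S Δ {h}, k} (symmetric difference), and if j ∉ S then CNOT_{h,j} · D_{S,k} · CNOT_{h,j} = D_{S,k}. -/
noncomputable section

/-- `CNOT_{h,j}`: the permutation matrix of the involution replacing `z j` by `z j + z h`. -/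
def CNOTmat (n : ℕ) (h j : Fin n) : Matrix (Fin n → Fin 2) (Fin n → Fin 2) ℂ :=
  Matrix.of fun z w => if w = Function.update z j (z j + z h) then 1 else 0

namespace Stmt5Aux

variable {n : ℕ}

/-- the CNOT involution on bit strings -/
def sig (h j : Fin n) (z : Fin n → Fin 2) : Fin n → Fin 2 :=
  Function.update z j (z j + z h)

lemma sig_invol (h j : Fin n) (hhj : h ≠ j) (z : Fin n → Fin 2) :
    sig h j (sig h j z) = z := by
  have fin2 : ∀ a b : Fin 2, a + b + b = a := by decide
  funext i
  rcases eq_or_ne i j with rfl | hi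
  · simp [sig, Function.update_self, Function.update_of_ne hhj, fin2]
  · simp [sig, Function.update_of_ne hi]

lemma cnot_apply (h j : Fin n) (z w : Fin n → Fin 2) :
    CNOTmat n h j z w = if w = sig h j z then 1 else 0 := rfl

lemma cnot_mul (h j : Fin n) (A : Matrix (Fin n → Fin 2) (Fin n → Fin 2) ℂ) :
    CNOTmat n h j * A = Matrix.of fun z w => A (sig h j z) w := by
  ext z w
  simp [Matrix.mul_apply, cnot_apply, ite_mul]

lemma mul_cnot (h j : Fin n) (hhj : h ≠ j)
    (A : Matrix (Fin n → Fin 2) (Fin n → Fin 2) ℂ) :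
    A * CNOTmat n h j = Matrix.of fun z w => A z (sig h j w) := by
  ext z w
  have key : ∀ x, (w = sig h j x) ↔ (x = sig h j w) := by
    intro x
    constructor
    · rintro rfl; rw [sig_invol h j hhj]
    · rintro rfl; rw [sig_invol h j hhj]
  simp only [Matrix.mul_apply, cnot_apply, mul_ite, mul_one, mul_zero, key]
  simp

lemma conj_diag (h j : Fin n) (hhj : h ≠ j) (d : (Fin n → Fin 2) → ℂ) :
    CNOTmat n h j * Matrix.diagonal d * CNOTmat n h j =
      Matrix.diagonal fun z => d (sig h j z) := by
  rw [cnot_mul, mul_cnot h j hhj]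
  ext z w
  have hinj : sig h j z = sig h j w ↔ z = w := by
    constructor
    · intro e
      have := congrArg (sig h j) e
      rwa [sig_invol h j hhj, sig_invol h j hhj] at this
    · rintro rfl; rfl
  by_cases hzw : z = w
  · subst hzw; simp [Matrix.diagonal_apply]
  · simp [Matrix.diagonal_apply, hzw, hinj]

lemma cnot_mul_cnot (h j : Fin n) (hhj : h ≠ j) :
    CNOTmat n h j * CNOTmat n h j = 1 := by
  rw [cnot_mul]
  ext z w
  simp [cnot_apply, sig_invol h j hhj, Matrix.one_apply, eq_comm]

lemma conj_Dop (h j : Fin n) (hhj : h ≠ j) (S S' : Finset (Fin n)) (k : ℤ)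
    (hZ : ∀ z : Fin n → Fin 2,
      ((-1:ℂ) ^ (∑ i ∈ S, ((sig h j z) i : ℕ))) = (-1:ℂ) ^ (∑ i ∈ S', ((z i : ℕ)))) :
    CNOTmat n h j * Dop n S k * CNOTmat n h j = Dop n S' k := by
  have hCC := cnot_mul_cnot h j hhj
  have hUnit : IsUnit (CNOTmat n h j) := ⟨⟨CNOTmat n h j, CNOTmat n h j, hCC, hCC⟩, rfl⟩
  have hinv : (CNOTmat n h j)⁻¹ = CNOTmat n h j := Matrix.inv_eq_left_inv hCC
  have hzg : CNOTmat n h j * Zgad n S * CNOTmat n h j = Zgad n S' := by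
    rw [Zgad, conj_diag h j hhj, Zgad]
    exact congrArg Matrix.diagonal (funext hZ)
  calc CNOTmat n h j * Dop n S k * CNOTmat n h j
      = CNOTmat n h j * Dop n S k * (CNOTmat n h j)⁻¹ := by rw [hinv]
    _ = NormedSpace.exp (CNOTmat n h j *
          ((-(↑Real.pi * Complex.I / (((2:ℝ) ^ k : ℝ) : ℂ))) • Zgad n S) *
          (CNOTmat n h j)⁻¹) := (Matrix.exp_conj _ _ hUnit).symm
    _ = Dop n S' k := by
        rw [hinv, Matrix.mul_smul, Matrix.smul_mul, hzg, Dop]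

/-- `ε a = (-1)^a` for `a : Fin 2`. -/
def eps (a : Fin 2) : ℂ := (-1 : ℂ) ^ (a : ℕ)

lemma eps_add (a b : Fin 2) : eps (a + b) = eps a * eps b := by
  fin_cases a <;> fin_cases b <;> norm_num [eps, Fin.add_def]

lemma eps_sq (a : Fin 2) : eps a * eps a = 1 := by
  fin_cases a <;> norm_num [eps]

lemma pow_sum_eq_prod (T : Finset (Fin n)) (z : Fin n → Fin 2) :
    (-1:ℂ) ^ (∑ i ∈ T, ((z i : ℕ))) = ∏ i ∈ T, eps (z i) := by
  rw [← Finset.prod_pow_eq_pow_sum]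
  rfl

lemma parity_mem (h j : Fin n) (hhj : h ≠ j) (S : Finset (Fin n)) (hj : j ∈ S)
    (z : Fin n → Fin 2) :
    ((-1:ℂ) ^ (∑ i ∈ S, ((sig h j z) i : ℕ))) =
      (-1:ℂ) ^ (∑ i ∈ symmDiff S {h}, ((z i : ℕ))) := by
  rw [pow_sum_eq_prod, pow_sum_eq_prod]
  have hL : ∏ i ∈ S, eps (sig h j z i) = eps (z h) * ∏ i ∈ S, eps (z i) := by
    rw [← Finset.mul_prod_erase S _ hj, ← Finset.mul_prod_erase S (fun i => eps (z i)) hj]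
    have h1 : sig h j z j = z j + z h := Function.update_self _ _ _
    have h2 : ∏ i ∈ S.erase j, eps (sig h j z i) = ∏ i ∈ S.erase j, eps (z i) := by
      refine Finset.prod_congr rfl fun i hi => ?_
      rw [sig, Function.update_of_ne (Finset.mem_erase.mp hi).1]
    rw [h1, h2, eps_add]
    ring
  rw [hL]
  by_cases hS : h ∈ S
  · have hsd : symmDiff S {h} = S.erase h := by
      ext i
      simp only [Finset.mem_symmDiff, Finset.mem_singleton, Finset.mem_erase]
      constructor
      · rintro (⟨hiS, hih⟩ | ⟨rfl, hiS⟩)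
        · exact ⟨hih, hiS⟩
        · exact absurd hS hiS
      · rintro ⟨hih, hiS⟩; exact Or.inl ⟨hiS, hih⟩
    rw [hsd, ← Finset.mul_prod_erase S (fun i => eps (z i)) hS, ← mul_assoc, eps_sq, one_mul]
  · have hsd : symmDiff S {h} = insert h S := by
      ext i
      simp only [Finset.mem_symmDiff, Finset.mem_singleton, Finset.mem_insert]
      constructor
      · rintro (⟨hiS, _⟩ | ⟨rfl, _⟩)
        · exact Or.inr hiS
        · exact Or.inl rfl
      · rintro (rfl | hiS)
        · exact Or.inr ⟨rfl, hS⟩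
        · exact Or.inl ⟨hiS, fun e => hS (by rw [← e]; exact hiS)⟩
    rw [hsd, Finset.prod_insert hS]

lemma parity_not_mem (h j : Fin n) (S : Finset (Fin n)) (hj : j ∉ S)
    (z : Fin n → Fin 2) :
    ((-1:ℂ) ^ (∑ i ∈ S, ((sig h j z) i : ℕ))) =
      (-1:ℂ) ^ (∑ i ∈ S, ((z i : ℕ))) := by
  congr 1
  refine Finset.sum_congr rfl fun i hi => ?_
  rw [sig, Function.update_of_ne (fun e => hj (by rw [← e]; exact hi))]

end Stmt5Aux

theorem stmt5 (n : ℕ) (hn : 1 ≤ n) (h j : Fin n) (hhj : h ≠ j) (S : Finset (Fin n)) (k : ℤ) :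
    (j ∈ S → CNOTmat n h j * Dop n S k * CNOTmat n h j = Dop n (symmDiff S {h}) k) ∧
    (j ∉ S → CNOTmat n h j * Dop n S k * CNOTmat n h j = Dop n S k) := by
  constructor
  · intro hj
    exact Stmt5Aux.conj_Dop h j hhj S _ k (Stmt5Aux.parity_mem h j hhj S hj)
  · intro hj
    exact Stmt5Aux.conj_Dop h j hhj S S k (Stmt5Aux.parity_not_mem h j S hj)
end
end

section
/- For every n ≥ 1 and every integer k, the alternating-sign product of phase-parity operators over all nonempty subsets equals, up to an explicit global phase, a controlled phase on the all-ones string: ∏_{∅ ≠ S ⊆ Fin n} D_{S,k}^{(−1)^{|S|}} = exp(iπ/2^k) • diagonal(z ↦ if z is the all-ones string then exp(−iπ · 2^{n−k}) else 1), where D_{S,k}^{(−1)^{|S|}} means D_{S,k} when |S| is even and D_{S,k}⁻¹ = exp(+(π·i/2^k) • Z_S) when |S| is odd (all factors are diagonal, hence commute, so the Finset product is well defined). -/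
noncomputable section

/-- Exponentials of scalar multiples of parity operators commute (they are all diagonal). -/
theorem zcomm (n : ℕ) (c d : ℂ) (S T : Finset (Fin n)) :
    Commute (NormedSpace.exp (c • Zgad n S)) (NormedSpace.exp (d • Zgad n T)) := by
  apply Commute.exp
  unfold Zgad
  rw [Commute, SemiconjBy, Matrix.smul_mul, Matrix.mul_smul, Matrix.diagonal_mul_diagonal,
    Matrix.smul_mul, Matrix.mul_smul, Matrix.diagonal_mul_diagonal, smul_comm]
  have hfg : (fun i : Fin n → Fin 2 =>
      ((-1 : ℂ) ^ (∑ j ∈ S, (i j : ℕ))) * ((-1 : ℂ) ^ (∑ j ∈ T, (i j : ℕ)))) =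
      (fun i : Fin n → Fin 2 =>
      ((-1 : ℂ) ^ (∑ j ∈ T, (i j : ℕ))) * ((-1 : ℂ) ^ (∑ j ∈ S, (i j : ℕ)))) :=
    funext fun i => mul_comm _ _
  rw [hfg]

/-- `D_{S,k}^{(-1)^{|S|}}`: `D_{S,k}` when `|S|` is even, and
`D_{S,k}⁻¹ = exp(+(π i/2^k) • Z_S)` when `|S|` is odd. -/
def Dalt (n : ℕ) (k : ℤ) (S : Finset (Fin n)) : Matrix (Fin n → Fin 2) (Fin n → Fin 2) ℂ :=
  if Even S.card then Dop n S k
  else NormedSpace.exp ((↑Real.pi * Complex.I / (((2:ℝ) ^ k : ℝ) : ℂ)) • Zgad n S)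

theorem daltComm (n : ℕ) (k : ℤ) (S T : Finset (Fin n)) :
    Commute (Dalt n k S) (Dalt n k T) := by
  unfold Dalt Dop
  split <;> split <;> exact zcomm n _ _ S T

theorem exp_smul_Zgad (n : ℕ) (c : ℂ) (S : Finset (Fin n)) :
    NormedSpace.exp (c • Zgad n S) =
      Matrix.diagonal (fun z => Complex.exp (c * (-1:ℂ) ^ (∑ j ∈ S, (z j : ℕ)))) := by
  rw [Zgad, ← Matrix.diagonal_smul, Matrix.exp_diagonal]
  funext z
  rw [Pi.exp_def]
  simp [Complex.exp_eq_exp_ℂ, smul_eq_mul]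

theorem stmt10 (n : ℕ) (hn : 1 ≤ n) (k : ℤ) :
    Finset.noncommProd (Finset.univ.filter fun S : Finset (Fin n) => S ≠ ∅)
        (fun S => Dalt n k S) (fun S _ T _ _ => daltComm n k S T) =
      Complex.exp (↑Real.pi * Complex.I / (((2:ℝ) ^ k : ℝ) : ℂ)) •
        Matrix.diagonal (fun z : Fin n → Fin 2 =>
          if z = fun _ => 1 then
            Complex.exp (-(↑Real.pi * Complex.I) * (((2:ℝ) ^ ((n : ℤ) - k) : ℝ) : ℂ))
          else 1) := by
  set c : ℂ := ↑Real.pi * Complex.I / (((2:ℝ) ^ k : ℝ) : ℂ) with hc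
  set g : Finset (Fin n) → (Fin n → Fin 2) → ℂ := fun S z =>
    (if Even S.card then (-1:ℂ) else 1) * (-1:ℂ) ^ (∑ j ∈ S, (z j : ℕ)) with hg
  have hD : ∀ S : Finset (Fin n), Dalt n k S =
      Matrix.diagonal (fun z => Complex.exp (c * g S z)) := by
    intro S
    rw [Dalt, Dop, ← hc]
    split_ifs with h
    · rw [exp_smul_Zgad]
      have : (fun z : Fin n → Fin 2 =>
          Complex.exp (-c * (-1:ℂ) ^ (∑ j ∈ S, (z j : ℕ)))) =
          fun z => Complex.exp (c * g S z) := by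
        funext z
        simp only [hg, if_pos h]
        congr 1; ring
      rw [← this]
    · rw [exp_smul_Zgad]
      have : (fun z : Fin n → Fin 2 =>
          Complex.exp (c * (-1:ℂ) ^ (∑ j ∈ S, (z j : ℕ)))) =
          fun z => Complex.exp (c * g S z) := by
        funext z
        simp only [hg, if_neg h]
        congr 1; ring
      rw [← this]
  rw [Finset.noncommProd_congr rfl (fun S _ => hD S) (fun S _ T _ _ => daltComm n k S T)]
  have key : Finset.noncommProd (Finset.univ.filter fun S : Finset (Fin n) => S ≠ ∅)
      (fun S => Matrix.diagonal (fun z => Complex.exp (c * g S z)))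
      (fun x hx y hy h => by
        dsimp only [Function.onFun]
        rw [← hD _, ← hD _]
        exact daltComm n k x y) =
      Matrix.diagonal (∏ S ∈ Finset.univ.filter (fun S : Finset (Fin n) => S ≠ ∅),
        fun z => Complex.exp (c * g S z)) := by
    rw [← Finset.noncommProd_eq_prod (Finset.univ.filter fun S : Finset (Fin n) => S ≠ ∅)
      (fun S z => Complex.exp (c * g S z))]
    exact (Finset.map_noncommProd _ _ _ (Matrix.diagonalRingHom (Fin n → Fin 2) ℂ)).symm
  rw [key, ← Matrix.diagonal_smul]
  -- sum lemma
  have hP : ∀ z : Fin n → Fin 2,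
      ∏ j : Fin n, ((-(-1:ℂ) ^ (z j : ℕ)) + 1) =
        if z = fun _ => 1 then (2:ℂ) ^ n else 0 := by
    intro z
    split_ifs with hz
    · subst hz; simp; norm_num
    · obtain ⟨j, hj⟩ : ∃ j, z j ≠ 1 := by
        by_contra h; push_neg at h; exact hz (funext h)
      have hj0 : z j = 0 := by omega
      exact Finset.prod_eq_zero (Finset.mem_univ j) (by rw [hj0]; norm_num)
  have hsum : ∀ z : Fin n → Fin 2,
      ∑ S ∈ Finset.univ.filter (fun S : Finset (Fin n) => S ≠ ∅), g S z =
        1 - (if z = fun _ => 1 then (2:ℂ) ^ n else 0) := by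
    intro z
    rw [Finset.filter_ne', Finset.sum_erase_eq_sub (Finset.mem_univ ∅)]
    have hgS : ∀ S : Finset (Fin n), g S z = -∏ j ∈ S, ((-(-1:ℂ) ^ (z j : ℕ))) := by
      intro S
      rw [hg]
      have h1 : ∏ j ∈ S, ((-(-1:ℂ) ^ (z j : ℕ))) =
          (-1:ℂ) ^ S.card * ∏ j ∈ S, (-1:ℂ) ^ (z j : ℕ) := by
        calc ∏ j ∈ S, ((-(-1:ℂ) ^ (z j : ℕ)))
            = ∏ j ∈ S, ((-1:ℂ) * (-1:ℂ) ^ (z j : ℕ)) := by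
              refine Finset.prod_congr rfl fun j _ => by ring
          _ = (-1:ℂ) ^ S.card * ∏ j ∈ S, (-1:ℂ) ^ (z j : ℕ) := by
              rw [Finset.prod_mul_distrib, Finset.prod_const]
      rw [h1, Finset.prod_pow_eq_pow_sum]
      rcases Nat.even_or_odd S.card with h | h
      · simp [h, h.neg_one_pow]
      · simp [Nat.not_even_iff_odd.2 h, h.neg_one_pow]
    simp only [hgS]
    rw [Finset.sum_neg_distrib]
    have hpa := Finset.prod_add (fun j : Fin n => (-(-1:ℂ) ^ (z j : ℕ))) (fun _ => (1:ℂ))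
      Finset.univ
    simp only [Finset.prod_const_one, mul_one] at hpa
    rw [Finset.powerset_univ] at hpa
    rw [← hpa, hP z]
    simp only [Finset.prod_empty]
    ring
  have hfun : (∏ S ∈ Finset.univ.filter (fun S : Finset (Fin n) => S ≠ ∅),
      fun z => Complex.exp (c * g S z)) =
      Complex.exp c • fun z : Fin n → Fin 2 =>
        if z = fun _ => 1 then
          Complex.exp (-(↑Real.pi * Complex.I) * (((2:ℝ) ^ ((n : ℤ) - k) : ℝ) : ℂ))
        else 1 := by
    funext z
    rw [Finset.prod_apply, ← Complex.exp_sum, ← Finset.mul_sum, hsum z, Pi.smul_apply,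
      smul_eq_mul]
    split_ifs with hz
    · rw [← Complex.exp_add]
      congr 1
      rw [mul_sub, mul_one]
      have h2 : c * (2:ℂ) ^ n = ↑Real.pi * Complex.I * (((2:ℝ) ^ ((n : ℤ) - k) : ℝ) : ℂ) := by
        rw [hc]
        push_cast [Complex.ofReal_zpow]
        rw [zpow_sub₀ (by norm_num : (2:ℂ) ≠ 0), zpow_natCast]
        field_simp
      rw [h2]; ring
    · rw [mul_sub, mul_zero, mul_one, sub_zero, mul_one]
  rw [hfun]
end
end

section
/- For every n ≥ 1, every integer k, every nonempty S : Finset (Fin n), and every j ∈ S, the phase-parity operator D_{S,k} can be reduced to a single-qubit phase by conjugation with a CNOT circuit: there exists a list L of ordered pairs (h,t) of distinct elements of Fin n such that, with U equal to the product of the matrices CNOT_{h,t} over the list L (in order), U · D_{S,k} · U⁻¹ = D_{{j},k}. -/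
noncomputable section

section helper

variable {m : Type*} [Fintype m] [DecidableEq m]

lemma pmat_mul_pmat {f : m → m} (hf : Function.Involutive f) :
    (Matrix.of fun z w => if w = f z then (1:ℂ) else 0) *
      (Matrix.of fun z w => if w = f z then (1:ℂ) else 0) = 1 := by
  ext z w
  simp only [Matrix.mul_apply, Matrix.of_apply, Matrix.one_apply, ite_mul, one_mul, zero_mul,
    Finset.sum_ite_eq', Finset.mem_univ, if_true]
  rw [hf z]
  exact if_congr eq_comm rfl rfl

lemma pmat_conj_diag {f : m → m} (hf : Function.Involutive f) (d : m → ℂ) :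
    (Matrix.of fun z w => if w = f z then (1:ℂ) else 0) * Matrix.diagonal d *
      (Matrix.of fun z w => if w = f z then (1:ℂ) else 0) = Matrix.diagonal (d ∘ f) := by
  ext z w
  simp only [Matrix.mul_apply, Matrix.of_apply, Matrix.diagonal_apply, ite_mul, one_mul,
    zero_mul, mul_ite, mul_one, mul_zero, Finset.sum_ite_eq', Finset.mem_univ, if_true]
  have h1 : ∀ x : m, (w = f x) ↔ (x = f w) := fun x =>
    ⟨fun h => by rw [h, hf], fun h => by rw [h, hf]⟩
  simp only [h1, Finset.sum_ite_eq', Finset.mem_univ, if_true]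
  by_cases h : z = w
  · subst h; simp [hf z]
  · rw [if_neg h, if_neg]
    intro hc
    exact h ((hf.injective hc).symm)

end helper

section par
variable {n : ℕ}

lemma fin2_add_self (a b : Fin 2) : a + b + b = a := by revert a b; decide

lemma cnot_invol {i j : Fin n} (hij : i ≠ j) :
    Function.Involutive (fun z : Fin n → Fin 2 => Function.update z j (z j + z i)) := by
  intro z
  funext x
  rcases eq_or_ne x j with rfl | hx
  · simp [Function.update_self, Function.update_of_ne hij, fin2_add_self]
  · simp [Function.update_of_ne hx]

lemma neg_one_pow_fin2_add (a b : Fin 2) :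
    ((-1 : ℂ)) ^ (((a + b : Fin 2) : ℕ)) = (-1) ^ (a : ℕ) * (-1) ^ (b : ℕ) := by
  fin_cases a <;> fin_cases b <;> simp

lemma parity_key {i j : Fin n} (hij : i ≠ j) {S : Finset (Fin n)}
    (hi : i ∈ S) (hj : j ∈ S) (z : Fin n → Fin 2) :
    ((-1:ℂ)) ^ (∑ l ∈ S, ((Function.update z j (z j + z i)) l : ℕ)) =
      (-1) ^ (∑ l ∈ S.erase i, (z l : ℕ)) := by
  rw [← Finset.prod_pow_eq_pow_sum, ← Finset.prod_pow_eq_pow_sum]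
  rw [← Finset.mul_prod_erase _ _ hj]
  have hiej : i ∈ S.erase j := Finset.mem_erase.mpr ⟨hij, hi⟩
  rw [← Finset.mul_prod_erase _ _ hiej]
  have hjei : j ∈ S.erase i := Finset.mem_erase.mpr ⟨Ne.symm hij, hj⟩
  rw [← Finset.mul_prod_erase _ (fun l => ((-1:ℂ)) ^ ((z l : ℕ))) hjei]
  rw [Finset.erase_right_comm]
  have hupd : ∀ l ∈ (S.erase i).erase j,
      ((-1:ℂ)) ^ (((Function.update z j (z j + z i)) l : ℕ)) = (-1) ^ ((z l : ℕ)) := by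
    intro l hl
    rw [Function.update_of_ne (Finset.mem_erase.mp hl).1]
  rw [Finset.prod_congr rfl hupd]
  rw [Function.update_self, Function.update_of_ne hij, neg_one_pow_fin2_add]
  have hsq : ((-1:ℂ))^((z i : ℕ)) * (-1)^((z i : ℕ)) = 1 := by
    rw [← pow_add, ← two_mul, pow_mul]; norm_num
  calc ((-1:ℂ)) ^ ((z j:ℕ)) * (-1) ^ ((z i:ℕ)) *
        ((-1) ^ ((z i:ℕ)) * ∏ l ∈ (S.erase i).erase j, (-1) ^ ((z l:ℕ)))
      = ((-1:ℂ)) ^ ((z j:ℕ)) * (((-1) ^ ((z i:ℕ)) * (-1) ^ ((z i:ℕ))) *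
        ∏ l ∈ (S.erase i).erase j, (-1) ^ ((z l:ℕ)) ) := by ring
    _ = _ := by rw [hsq, one_mul]

lemma cnot_eq_pmat (i j : Fin n) :
    CNOTmat n i j =
      Matrix.of fun z w =>
        if w = (fun z : Fin n → Fin 2 => Function.update z j (z j + z i)) z then (1:ℂ) else 0 :=
  rfl

lemma cnot_mul_self {i j : Fin n} (hij : i ≠ j) :
    CNOTmat n i j * CNOTmat n i j = 1 := by
  rw [cnot_eq_pmat]; exact pmat_mul_pmat (cnot_invol hij)

lemma cnot_isUnit {i j : Fin n} (hij : i ≠ j) : IsUnit (CNOTmat n i j) :=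
  ⟨⟨CNOTmat n i j, CNOTmat n i j, cnot_mul_self hij, cnot_mul_self hij⟩, rfl⟩

lemma cnot_inv {i j : Fin n} (hij : i ≠ j) : (CNOTmat n i j)⁻¹ = CNOTmat n i j :=
  Matrix.inv_eq_right_inv (cnot_mul_self hij)

lemma cnot_conj_Zgad {i j : Fin n} (hij : i ≠ j) {S : Finset (Fin n)}
    (hi : i ∈ S) (hj : j ∈ S) :
    CNOTmat n i j * Zgad n S * CNOTmat n i j = Zgad n (S.erase i) := by
  rw [cnot_eq_pmat, Zgad, pmat_conj_diag (cnot_invol hij)]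
  unfold Zgad
  refine congrArg Matrix.diagonal (funext fun z => ?_)
  simpa using parity_key hij hi hj z

lemma main_Zgad (j : Fin n) (S : Finset (Fin n)) (hj : j ∈ S) :
    ∃ L : List (Fin n × Fin n), (∀ p ∈ L, p.1 ≠ p.2) ∧
      IsUnit (L.map fun p => CNOTmat n p.1 p.2).prod ∧
      (L.map fun p => CNOTmat n p.1 p.2).prod * Zgad n S *
        ((L.map fun p => CNOTmat n p.1 p.2).prod)⁻¹ = Zgad n {j} := by
  induction S using Finset.strongInduction with
  | _ S ih =>
    by_cases hS1 : S = {j}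
    · subst hS1
      have h1 : (1 : Matrix (Fin n → Fin 2) (Fin n → Fin 2) ℂ)⁻¹ = 1 :=
        Matrix.inv_eq_right_inv (by simp)
      exact ⟨[], by simp, by simp, by simp [h1]⟩
    · have hex : ∃ i ∈ S, i ≠ j := by
        by_contra h
        push_neg at h
        exact hS1 (Finset.eq_singleton_iff_unique_mem.mpr ⟨hj, h⟩)
      obtain ⟨i, hi, hij⟩ := hex
      have hT : S.erase i ⊂ S := Finset.erase_ssubset hi
      have hjT : j ∈ S.erase i := Finset.mem_erase.mpr ⟨Ne.symm hij, hj⟩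
      obtain ⟨L', hne, hunit, heq⟩ := ih (S.erase i) hT hjT
      refine ⟨L' ++ [(i, j)], ?_, ?_, ?_⟩
      · intro p hp
        rcases List.mem_append.mp hp with h | h
        · exact hne p h
        · simp only [List.mem_singleton] at h
          subst h; exact hij
      · rw [List.map_append, List.prod_append]
        simp only [List.map_cons, List.map_nil, List.prod_cons, List.prod_nil, mul_one]
        exact hunit.mul (cnot_isUnit hij)
      · rw [List.map_append, List.prod_append]
        simp only [List.map_cons, List.map_nil, List.prod_cons, List.prod_nil, mul_one]
        rw [Matrix.mul_inv_rev, cnot_inv hij]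
        calc (L'.map fun p => CNOTmat n p.1 p.2).prod * CNOTmat n i j * Zgad n S *
              (CNOTmat n i j * ((L'.map fun p => CNOTmat n p.1 p.2).prod)⁻¹)
            = (L'.map fun p => CNOTmat n p.1 p.2).prod *
              (CNOTmat n i j * Zgad n S * CNOTmat n i j) *
              ((L'.map fun p => CNOTmat n p.1 p.2).prod)⁻¹ := by
              simp only [Matrix.mul_assoc]
          _ = _ := by rw [cnot_conj_Zgad hij hi hj]; exact heq

end par

theorem stmt19 (n : ℕ) (hn : 1 ≤ n) (k : ℤ) (S : Finset (Fin n)) (hS : S.Nonempty)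
    (j : Fin n) (hj : j ∈ S) :
    ∃ L : List (Fin n × Fin n), (∀ p ∈ L, p.1 ≠ p.2) ∧
      (L.map fun p => CNOTmat n p.1 p.2).prod * Dop n S k *
        ((L.map fun p => CNOTmat n p.1 p.2).prod)⁻¹ = Dop n {j} k := by
  obtain ⟨L, hne, hunit, heq⟩ := main_Zgad j S hj
  refine ⟨L, hne, ?_⟩
  set U := (L.map fun p => CNOTmat n p.1 p.2).prod with hU
  set c : ℂ := (-(↑Real.pi * Complex.I / (((2:ℝ) ^ k : ℝ) : ℂ))) with hc
  have key : U * (c • Zgad n S) * U⁻¹ = c • Zgad n {j} := by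
    rw [Matrix.mul_smul, Matrix.smul_mul, heq]
  calc U * Dop n S k * U⁻¹
      = NormedSpace.exp (U * (c • Zgad n S) * U⁻¹) := (Matrix.exp_conj U (c • Zgad n S) hunit).symm
    _ = NormedSpace.exp (c • Zgad n {j}) := by rw [key]
    _ = Dop n {j} k := rfl
end
end
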